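/- arXiv:1907.12589 — 3 statements merged into one kernel-verified Lean document; each statement's English description precedes it below -/
import Mathlib

section
/- Let σ > 0, τ > 0, μ ∈ ℝ and α ∈ (0,1). Suppose c ∈ ℝ satisfies [Φ(c/σ + μσ/τ²) + Φ(c/σ − μσ/τ²)]/2 = 1 − α/2. If Y is a real random variable with the normal distribution N(0, σ²), then P(|Y + μσ²/τ²| > c) = α; that is, the FAB test that rejects when |Y + μσ²/τ²| > c has size exactly α under the null hypothesis θ = 0. -/
open MeasureTheory ProbabilityTheory

/-!
Since `Y + b ~ N(b, σ²)` with `b = μσ²/τ²`, the event `|Y + b| > c` is the union of the two tails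
`(-∞, -c)` and `(c, ∞)` of `N(b, σ²)`; standardising and using `Φ(-x) = 1 - Φ(x)` its probability is
`2 - Φ((c + b)/σ) - Φ((c - b)/σ)`, which the calibration of `c` makes equal to `α`.
The two tails are disjoint because `α < 1` forces `c > 0`.
-/

/-- Φ, the standard normal cumulative distribution function. -/
noncomputable def Phi : ℝ → ℝ := fun x => ProbabilityTheory.cdf (gaussianReal 0 1) x

lemma gaussianReal_map_standardize {σ : ℝ} (hσ : σ ≠ 0) (m : ℝ) :
    (gaussianReal m (σ ^ 2).toNNReal).map (fun y ↦ (y - m) / σ) = gaussianReal 0 1 := by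
  have : (fun y ↦ (y - m) / σ) = (· / σ) ∘ (· - m) := rfl
  rw [this, ← Measure.map_map (by fun_prop) (by fun_prop), gaussianReal_map_sub_const,
    gaussianReal_map_div_const, sub_self, zero_div]
  congr
  ext
  simp [sq_nonneg, hσ]

lemma measureReal_gaussianReal_Iic {σ : ℝ} (hσ : 0 < σ) (m x : ℝ) :
    (gaussianReal m (σ ^ 2).toNNReal).real (Set.Iic x) = Phi ((x - m) / σ) := by
  have hpre : (fun y ↦ (y - m) / σ) ⁻¹' Set.Iic ((x - m) / σ) = Set.Iic x := by
    ext y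
    simp [div_le_div_iff_of_pos_right hσ]
  rw [Phi, cdf_eq_real, ← gaussianReal_map_standardize hσ.ne' m,
    map_measureReal_apply (by fun_prop) measurableSet_Iic, hpre]

lemma Phi_neg (x : ℝ) : Phi (-x) = 1 - Phi x := by
  have hpre : (fun y : ℝ ↦ -y) ⁻¹' Set.Iic (-x) = (Set.Iio x)ᶜ := by
    ext y
    simp
  have := nullSingletonClass_gaussianReal (μ := 0) one_ne_zero
  have hsymm : (gaussianReal 0 1).map (fun y ↦ -y) = gaussianReal 0 1 := by
    rw [gaussianReal_map_neg, neg_zero]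
  have hmap : Phi (-x) = ((gaussianReal 0 1).map (fun y ↦ -y)).real (Set.Iic (-x)) := by
    rw [hsymm, Phi, cdf_eq_real]
  rw [hmap, map_measureReal_apply measurable_neg measurableSet_Iic, hpre,
    probReal_compl_eq_one_sub measurableSet_Iio, measureReal_congr Iio_ae_eq_Iic, Phi, cdf_eq_real]

lemma pos_of_one_lt_Phi_add_Phi {x d : ℝ} (h : 1 < Phi (x + d) + Phi (x - d)) : 0 < x := by
  by_contra! hx
  have : Phi (x - d) ≤ Phi (-(x + d)) := monotone_cdf _ (by linarith)
  linarith [Phi_neg (x + d)]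

lemma measureReal_gaussianReal_abs_gt {σ c : ℝ} (hσ : 0 < σ) (hc : 0 ≤ c) (m : ℝ) :
    (gaussianReal m (σ ^ 2).toNNReal).real {x | c < |x|} =
      2 - Phi ((c + m) / σ) - Phi ((c - m) / σ) := by
  have : NullSingletonClass (gaussianReal m (σ ^ 2).toNNReal) :=
    nullSingletonClass_gaussianReal (by simp [hσ.ne'])
  have hset : {x : ℝ | c < |x|} = Set.Iio (-c) ∪ (Set.Iic c)ᶜ := by
    ext x
    simp only [Set.mem_ofPred_eq, lt_abs, Set.mem_union, Set.mem_Iio, Set.mem_compl_iff,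
      Set.mem_Iic, not_le, lt_neg]
    tauto
  have hdisj : Disjoint (Set.Iio (-c)) (Set.Iic c)ᶜ :=
    Set.disjoint_compl_right_iff_subset.2 (Set.Iio_subset_Iic_iff.2 (by linarith))
  rw [hset, measureReal_union hdisj measurableSet_Iic.compl,
    probReal_compl_eq_one_sub measurableSet_Iic, measureReal_congr Iio_ae_eq_Iic,
    measureReal_gaussianReal_Iic hσ, measureReal_gaussianReal_Iic hσ,
    show (-c - m) / σ = -((c + m) / σ) by ring, Phi_neg]
  ring

theorem stmt_0_general {Ω : Type*} [MeasurableSpace Ω] (P : Measure Ω)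
    (σ τ μ α c : ℝ) (hσ : 0 < σ) (hα : α ∈ Set.Ioo (0 : ℝ) 1)
    (hc : (Phi (c / σ + μ * σ / τ ^ 2) + Phi (c / σ - μ * σ / τ ^ 2)) / 2 = 1 - α / 2)
    (Y : Ω → ℝ) (hY : P.map Y = gaussianReal 0 ((σ ^ 2 : ℝ).toNNReal)) :
    P {ω | |Y ω + μ * σ ^ 2 / τ ^ 2| > c} = ENNReal.ofReal α := by
  have hc_pos : 0 < c :=
    (div_pos_iff_of_pos_right hσ).1
      (pos_of_one_lt_Phi_add_Phi (d := μ * σ / τ ^ 2) (by linarith [hα.2]))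
  have hYm : AEMeasurable Y P := aemeasurable_of_map_neZero (by rw [hY]; infer_instance)
  set b := μ * σ ^ 2 / τ ^ 2 with hb_def
  have hb : b / σ = μ * σ / τ ^ 2 := by
    rw [hb_def]
    field_simp
  have hlaw : P.map (fun ω ↦ Y ω + b) = gaussianReal b (σ ^ 2).toNNReal := by
    rw [show (fun ω ↦ Y ω + b) = (· + b) ∘ Y from rfl,
      ← AEMeasurable.map_map_of_aemeasurable (by fun_prop) hYm, hY, gaussianReal_map_add_const,
      zero_add]
  have hevent : P {ω | |Y ω + b| > c} = P.map (fun ω ↦ Y ω + b) {x | c < |x|} :=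
    (Measure.map_apply_of_aemeasurable (hYm.add_const b)
      (measurableSet_lt measurable_const measurable_abs)).symm
  rw [hevent, hlaw, ← ofReal_measureReal, measureReal_gaussianReal_abs_gt hσ hc_pos.le, add_div,
    sub_div, hb]
  congr 1
  linarith

theorem stmt_0 {Ω : Type*} [MeasurableSpace Ω] (P : Measure Ω) [IsProbabilityMeasure P]
    (σ τ μ α c : ℝ) (hσ : 0 < σ) (hτ : 0 < τ) (hα : α ∈ Set.Ioo (0 : ℝ) 1)
    (hc : (Phi (c / σ + μ * σ / τ ^ 2) + Phi (c / σ - μ * σ / τ ^ 2)) / 2 = 1 - α / 2)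
    (Y : Ω → ℝ) (hY : P.map Y = gaussianReal 0 ((σ ^ 2 : ℝ).toNNReal)) :
    P {ω | |Y ω + μ * σ ^ 2 / τ ^ 2| > c} = ENNReal.ofReal α :=
  stmt_0_general P σ τ μ α c hσ hα hc Y hY
end

section
/- Let θ ∈ ℝ and let Z be a real random variable with the normal distribution N(θ, 1). Then for every b ∈ ℝ with b ≠ 0, P( p(Z,b) < p(Z,0) ) > Φ( sign(b) · θ ), where sign(b) = 1 if b > 0 and sign(b) = −1 if b < 0. -/
open MeasureTheory ProbabilityTheory

/-- The FAB p-value function. -/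
noncomputable def fabP (z b : ℝ) : ℝ := 1 - |Phi (z + b) - Phi (-z)|

open Set
open scoped NNReal ENNReal

local notation "μ₀" => gaussianReal (0:ℝ) (1:ℝ≥0)

lemma mu0_ne_zero {s : Set ℝ} (hs : volume s ≠ 0) : μ₀ s ≠ 0 := by
  intro h
  exact hs (gaussianReal_absolutelyContinuous' 0 one_ne_zero h)

lemma mu0_singleton (x : ℝ) : μ₀ {x} = 0 :=
  gaussianReal_absolutelyContinuous 0 one_ne_zero (measure_singleton x)

lemma mu0_Iic (x : ℝ) : μ₀ (Iic x) = ENNReal.ofReal (Phi x) :=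
  (ofReal_cdf _ x).symm

lemma mu0_Iic_lt {x y : ℝ} (h : x < y) : μ₀ (Iic x) < μ₀ (Iic y) := by
  have hu : Iic x ∪ Ioc x y = Iic y := Iic_union_Ioc_eq_Iic h.le
  have hd : Disjoint (Iic x) (Ioc x y) := Iic_disjoint_Ioc le_rfl
  rw [← hu, measure_union hd measurableSet_Ioc]
  refine ENNReal.lt_add_right (measure_ne_top _ _) ?_
  exact mu0_ne_zero (by simp [Real.volume_Ioc, h, sub_pos.2 h, ne_of_gt])

lemma mu0_Ioi_lt {x y : ℝ} (h : x < y) : μ₀ (Ioi y) < μ₀ (Ioi x) := by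
  have hu : Ioc x y ∪ Ioi y = Ioi x := Ioc_union_Ioi_eq_Ioi h.le
  have hd : Disjoint (Ioc x y) (Ioi y) := Ioc_disjoint_Ioi le_rfl
  rw [← hu, measure_union hd measurableSet_Ioi, add_comm]
  refine ENNReal.lt_add_right (measure_ne_top _ _) ?_
  exact mu0_ne_zero (by simp [Real.volume_Ioc, h, sub_pos.2 h, ne_of_gt])

lemma Phi_strictMono : StrictMono Phi := by
  intro x y h
  have := mu0_Iic_lt h
  rw [mu0_Iic, mu0_Iic] at this
  exact (ENNReal.ofReal_lt_ofReal_iff_of_nonneg (cdf_nonneg _ _)).mp this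

lemma Phi_continuous : Continuous Phi := by
  have f := ProbabilityTheory.cdf μ₀
  rw [continuous_iff_continuousAt]
  intro x
  have hml : Function.leftLim (⇑(ProbabilityTheory.cdf μ₀)) x = cdf μ₀ x := by
    have h1 : (ProbabilityTheory.cdf μ₀).measure {x} = 0 := by
      rw [measure_cdf]; exact mu0_singleton x
    rw [StieltjesFunction.measure_singleton] at h1
    have h2 := (monotone_cdf μ₀).leftLim_le (le_refl x)
    have h3 : cdf μ₀ x - Function.leftLim (⇑(cdf μ₀)) x ≤ 0 := by
      by_contra h
      push_neg at h
      exact (ENNReal.ofReal_pos.mpr h).ne' h1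
    linarith
  have hmr := (ProbabilityTheory.cdf μ₀).rightLim_eq x
  exact (monotone_cdf μ₀).continuousAt_iff_leftLim_eq_rightLim.mpr (hml.trans hmr.symm)

lemma mu0_Ici_eq (x : ℝ) : μ₀ (Ici x) = μ₀ (Ioi x) := by
  have : Ici x = {x} ∪ Ioi x := by
    ext y; simp [le_iff_lt_or_eq, or_comm, eq_comm]
  rw [this, measure_union (by simp) measurableSet_Ioi, mu0_singleton, zero_add]

lemma mu0_symm (x : ℝ) : μ₀ (Iic x) = μ₀ (Ici (-x)) := by
  have hmap : Measure.map (fun y => (-1 : ℝ) * y) μ₀ = μ₀ := by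
    rw [gaussianReal_map_const_mul (-1 : ℝ)]
    norm_num
  conv_lhs => rw [← hmap]
  rw [Measure.map_apply (by fun_prop) measurableSet_Iic]
  congr 1
  ext y
  simp [neg_le]

lemma ball_pos_of_cont {g : ℝ → ℝ} (hgc : Continuous g) (h0 : 0 < g 0) :
    ∃ ε > (0:ℝ), ∀ z : ℝ, |z| < ε → 0 < g z := by
  have hopen : IsOpen {z : ℝ | 0 < g z} := isOpen_lt continuous_const hgc
  obtain ⟨ε, hε, hball⟩ := Metric.isOpen_iff.mp hopen 0 h0
  refine ⟨ε, hε, fun z hz => ?_⟩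
  exact hball (by simpa [Real.dist_eq] using hz)

lemma fab_lt_of_pos {b : ℝ} (hb : 0 < b) :
    ∃ ε > (0:ℝ), ∀ z, -ε < z → fabP z b < fabP z 0 := by
  set g : ℝ → ℝ := fun z => Phi (z + b) + Phi z - 2 * Phi (-z) with hg
  have hgc : Continuous g := by
    apply Continuous.sub
    · exact (Phi_continuous.comp (continuous_id.add continuous_const)).add Phi_continuous
    · exact continuous_const.mul (Phi_continuous.comp continuous_neg)
  have h0 : 0 < g 0 := by
    have := Phi_strictMono hb
    simp only [hg, zero_add, neg_zero]
    linarith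
  obtain ⟨ε, hε, hball⟩ := ball_pos_of_cont hgc h0
  refine ⟨ε, hε, fun z hz => ?_⟩
  have hgz : 0 < g z := by
    rcases le_or_gt 0 z with h | h
    · have h1 : Phi (-z) < Phi (z + b) := Phi_strictMono (by linarith)
      have h2 : Phi (-z) ≤ Phi z := Phi_strictMono.monotone (by linarith)
      simp only [hg]; linarith
    · exact hball z (by rw [abs_of_neg h]; linarith)
  have h1 : Phi z < Phi (z + b) := Phi_strictMono (by linarith)
  have key : |Phi z - Phi (-z)| < |Phi (z + b) - Phi (-z)| := by
    have h2 : |Phi z - Phi (-z)| < Phi (z + b) - Phi (-z) := by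
      rw [abs_lt]
      constructor <;> simp only [hg] at hgz <;> linarith
    exact h2.trans_le (le_abs_self _)
  simp only [fabP, add_zero]
  linarith

lemma fab_lt_of_neg {b : ℝ} (hb : b < 0) :
    ∃ ε > (0:ℝ), ∀ z, z < ε → fabP z b < fabP z 0 := by
  set g : ℝ → ℝ := fun z => 2 * Phi (-z) - Phi z - Phi (z + b) with hg
  have hgc : Continuous g := by
    apply Continuous.sub
    · exact (continuous_const.mul (Phi_continuous.comp continuous_neg)).sub Phi_continuous
    · exact Phi_continuous.comp (continuous_id.add continuous_const)
  have h0 : 0 < g 0 := by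
    have := Phi_strictMono hb
    simp only [hg, zero_add, neg_zero]
    linarith
  obtain ⟨ε, hε, hball⟩ := ball_pos_of_cont hgc h0
  refine ⟨ε, hε, fun z hz => ?_⟩
  have hgz : 0 < g z := by
    rcases le_or_gt z 0 with h | h
    · have h1 : Phi (z + b) < Phi (-z) := Phi_strictMono (by linarith)
      have h2 : Phi z ≤ Phi (-z) := Phi_strictMono.monotone (by linarith)
      simp only [hg]; linarith
    · exact hball z (by rw [abs_of_pos h]; linarith)
  have h1 : Phi (z + b) < Phi z := Phi_strictMono (by linarith)
  have key : |Phi z - Phi (-z)| < |Phi (z + b) - Phi (-z)| := by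
    have h2 : |Phi z - Phi (-z)| < Phi (-z) - Phi (z + b) := by
      rw [abs_lt]
      constructor <;> simp only [hg] at hgz <;> linarith
    calc |Phi z - Phi (-z)| < Phi (-z) - Phi (z + b) := h2
    _ = -(Phi (z + b) - Phi (-z)) := by ring
    _ ≤ |Phi (z + b) - Phi (-z)| := neg_le_abs _
  simp only [fabP, add_zero]
  linarith

theorem stmt_6 {Ω : Type*} [MeasurableSpace Ω] (P : Measure Ω) [IsProbabilityMeasure P]
    (θ : ℝ) (Z : Ω → ℝ) (hZ : P.map Z = gaussianReal θ 1) (b : ℝ) (hb : b ≠ 0) :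
    P {ω | fabP (Z ω) b < fabP (Z ω) 0} >
      ENNReal.ofReal (Phi ((if 0 < b then (1 : ℝ) else -1) * θ)) := by
  have hZm : AEMeasurable Z P := by
    by_contra h
    rw [Measure.map_of_not_aemeasurable h] at hZ
    have h1 : (gaussianReal θ 1) Set.univ = 1 := measure_univ
    rw [← hZ] at h1
    simp at h1
  have hmap : Measure.map (· + θ) μ₀ = gaussianReal θ 1 := by
    rw [gaussianReal_map_add_const θ, zero_add]
  rcases lt_or_gt_of_ne hb with hneg | hpos
  · rw [if_neg (not_lt.mpr hneg.le), neg_one_mul]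
    obtain ⟨ε, hε, hset⟩ := fab_lt_of_neg hneg
    have hsub : {ω | Z ω ∈ Iio ε} ⊆ {ω | fabP (Z ω) b < fabP (Z ω) 0} :=
      fun ω hω => hset _ hω
    have hPmap : P {ω | Z ω ∈ Iio ε} = (gaussianReal θ 1) (Iio ε) := by
      rw [← hZ, Measure.map_apply_of_aemeasurable hZm measurableSet_Iio]
      rfl
    have hshift : (gaussianReal θ 1) (Iio ε) = μ₀ (Iio (ε - θ)) := by
      rw [← hmap, Measure.map_apply (measurable_add_const θ) measurableSet_Iio]
      congr 1
      ext x
      simp [sub_eq_iff_eq_add, lt_sub_iff_add_lt]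
    calc ENNReal.ofReal (Phi (-θ)) = μ₀ (Iic (-θ)) := (mu0_Iic _).symm
    _ < μ₀ (Iic (ε / 2 - θ)) := mu0_Iic_lt (by linarith)
    _ ≤ μ₀ (Iio (ε - θ)) := measure_mono (fun x hx => by simp only [mem_Iic, mem_Iio] at *; linarith)
    _ = P {ω | Z ω ∈ Iio ε} := by rw [hPmap, hshift]
    _ ≤ P {ω | fabP (Z ω) b < fabP (Z ω) 0} := measure_mono hsub
  · rw [if_pos hpos, one_mul]
    obtain ⟨ε, hε, hset⟩ := fab_lt_of_pos hpos
    have hsub : {ω | Z ω ∈ Ioi (-ε)} ⊆ {ω | fabP (Z ω) b < fabP (Z ω) 0} :=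
      fun ω hω => hset _ hω
    have hPmap : P {ω | Z ω ∈ Ioi (-ε)} = (gaussianReal θ 1) (Ioi (-ε)) := by
      rw [← hZ, Measure.map_apply_of_aemeasurable hZm measurableSet_Ioi]
      rfl
    have hshift : (gaussianReal θ 1) (Ioi (-ε)) = μ₀ (Ioi (-ε - θ)) := by
      rw [← hmap, Measure.map_apply (measurable_add_const θ) measurableSet_Ioi]
      congr 1
      ext x
      simp [sub_lt_iff_lt_add]
    calc ENNReal.ofReal (Phi θ) = μ₀ (Iic θ) := (mu0_Iic _).symm
    _ = μ₀ (Ici (-θ)) := mu0_symm θ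
    _ = μ₀ (Ioi (-θ)) := mu0_Ici_eq _
    _ < μ₀ (Ioi (-ε - θ)) := mu0_Ioi_lt (by linarith)
    _ = P {ω | Z ω ∈ Ioi (-ε)} := by rw [hPmap, hshift]
    _ ≤ P {ω | fabP (Z ω) b < fabP (Z ω) 0} := measure_mono hsub
end

section
/- Let T be a real random variable whose cumulative distribution function F is continuous on ℝ and symmetric about zero in the sense that F(−t) = 1 − F(t) for all t ∈ ℝ. Then for every b ∈ ℝ and every u ∈ [0,1], P( 1 − |F(T + b) − F(−T)| ≤ u ) = u. -/
/-!
By symmetry `F (x + b) - F (-x) = F (x + b) - 1 + F x =: G x`, a continuous nondecreasing function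
from `-1` to `1` with `G (-x - b) = -G x`. Since `F` is continuous, `F` is constant on no set of
positive mass, hence neither is `G` (a sum of `F` and a monotone function): the level sets of `G`
are null. For `u = 0` the event is `{|G| = 1}`. For `c = 1 - u ∈ [0, 1)` pick `q` with `G q = c`;
then `{|G| < c} = {G (-q - b) < G < G q}` is, up to level sets of `G`, the interval `(-q - b, q)`,
whose mass is `F q - F (-q - b) = G q = c`.
-/

open MeasureTheory ProbabilityTheory Set Filter Topology

namespace Monotone

variable {α β : Type*} [LinearOrder α] [LinearOrder β] [MeasurableSpace α] {μ : Measure α}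

lemma setOf_lt_ae_eq_Iio {G : α → β} (hG : Monotone G) {q : α} (hq : μ (G ⁻¹' {G q}) = 0) :
    {x | G x < G q} =ᵐ[μ] Iio q := by
  refine ae_eq_set.2 ⟨?_, measure_mono_null (fun x hx => ?_) hq⟩
  · exact measure_mono_null (fun x hx => (hx.2 (hG.reflect_lt hx.1)).elim) measure_empty
  · exact le_antisymm (hG (le_of_lt hx.1)) (not_lt.1 hx.2)

lemma setOf_gt_ae_eq_Ioi {G : α → β} (hG : Monotone G) {q : α} (hq : μ (G ⁻¹' {G q}) = 0) :
    {x | G q < G x} =ᵐ[μ] Ioi q := by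
  refine ae_eq_set.2 ⟨?_, measure_mono_null (fun x hx => ?_) hq⟩
  · exact measure_mono_null (fun x hx => (hx.2 (hG.reflect_lt hx.1)).elim) measure_empty
  · exact le_antisymm (not_lt.1 hx.2) (hG (le_of_lt hx.1))

lemma setOf_abs_lt_ae_eq_Ioo {G : α → ℝ} (hG : Monotone G) (hlevel : ∀ w, μ (G ⁻¹' {w}) = 0)
    {c : ℝ} {p q : α}
    (hp : G p = -c) (hq : G q = c) : {x | |G x| < c} =ᵐ[μ] Ioo p q := by
  have hsplit : {x | |G x| < c} = {x | G p < G x} ∩ {x | G x < G q} := by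
    ext x
    simp only [mem_ofPred_eq, mem_inter_iff, hp, hq, abs_lt]
  rw [hsplit, ← Ioi_inter_Iio]
  exact (hG.setOf_gt_ae_eq_Ioi (hlevel _)).inter (hG.setOf_lt_ae_eq_Iio (hlevel _))

end Monotone

namespace ProbabilityTheory

variable {μ : Measure ℝ}

lemma leftLim_cdf_of_continuous (hc : Continuous (cdf μ)) (x : ℝ) :
    Function.leftLim (cdf μ) x = cdf μ x :=
  leftLim_eq_of_tendsto ((hc.tendsto x).mono_left nhdsWithin_le_nhds)

lemma tendsto_cdf_add_sub_one_add_cdf_atBot (b : ℝ) :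
    Tendsto (fun x => cdf μ (x + b) - 1 + cdf μ x) atBot (𝓝 (-1)) := by
  simpa using (((tendsto_cdf_atBot μ).comp (tendsto_atBot_add_const_right _ b tendsto_id)).sub_const
    1).add (tendsto_cdf_atBot μ)

lemma tendsto_cdf_add_sub_one_add_cdf_atTop (b : ℝ) :
    Tendsto (fun x => cdf μ (x + b) - 1 + cdf μ x) atTop (𝓝 1) := by
  simpa using (((tendsto_cdf_atTop μ).comp (tendsto_atTop_add_const_right _ b tendsto_id)).sub_const
    1).add (tendsto_cdf_atTop μ)

lemma measure_Icc_of_continuous_cdf [IsProbabilityMeasure μ] (hc : Continuous (cdf μ)) (a b : ℝ) :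
    μ (Icc a b) = ENNReal.ofReal (cdf μ b - cdf μ a) := by
  conv_lhs => rw [← measure_cdf μ]
  rw [StieltjesFunction.measure_Icc, leftLim_cdf_of_continuous hc]

lemma measure_Ioo_of_continuous_cdf [IsProbabilityMeasure μ] (hc : Continuous (cdf μ)) (a b : ℝ) :
    μ (Ioo a b) = ENNReal.ofReal (cdf μ b - cdf μ a) := by
  conv_lhs => rw [← measure_cdf μ]
  rw [StieltjesFunction.measure_Ioo, leftLim_cdf_of_continuous hc]

/-- A level set of a continuous cdf is closed, so each of its compact pieces lies between its
least and greatest points, where the cdf takes the same value. -/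
lemma measure_cdf_preimage_singleton [IsProbabilityMeasure μ] (hc : Continuous (cdf μ)) (v : ℝ) :
    μ (cdf μ ⁻¹' {v}) = 0 := by
  have hS : IsClosed (cdf μ ⁻¹' {v}) := isClosed_singleton.preimage hc
  have hcover : cdf μ ⁻¹' {v} = ⋃ n : ℤ, cdf μ ⁻¹' {v} ∩ Icc (n : ℝ) (n + 1) := by
    rw [← inter_iUnion, iUnion_Icc_intCast, inter_univ]
  rw [hcover]
  refine measure_iUnion_null fun n => ?_
  set K := cdf μ ⁻¹' {v} ∩ Icc (n : ℝ) (n + 1)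
  have hK : IsCompact K := isCompact_Icc.inter_left hS
  rcases K.eq_empty_or_nonempty with hempty | hne
  · rw [hempty, measure_empty]
  have hinf : cdf μ (sInf K) = v := (hK.sInf_mem hne).1
  have hsup : cdf μ (sSup K) = v := (hK.sSup_mem hne).1
  refine measure_mono_null (fun x hx => ?_) (?_ : μ (Icc (sInf K) (sSup K)) = 0)
  · exact ⟨csInf_le hK.bddBelow hx, le_csSup hK.bddAbove hx⟩
  rw [measure_Icc_of_continuous_cdf hc, hinf, hsup, sub_self, ENNReal.ofReal_zero]

lemma measure_setOf_add_cdf_eq [IsProbabilityMeasure μ] {f : ℝ → ℝ} (hf : Monotone f)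
    (hc : Continuous (cdf μ)) (w : ℝ) : μ {x | f x + cdf μ x = w} = 0 := by
  rcases {x | f x + cdf μ x = w}.eq_empty_or_nonempty with hempty | ⟨x₀, hx₀ : f x₀ + _ = w⟩
  · rw [hempty, measure_empty]
  refine measure_mono_null (fun x (hx : f x + cdf μ x = w) => ?_)
    (measure_cdf_preimage_singleton hc (cdf μ x₀))
  show cdf μ x = cdf μ x₀
  rcases le_total x x₀ with h | h
  · linarith [hf h, monotone_cdf μ h]
  · linarith [hf h, monotone_cdf μ h]

lemma measure_one_sub_abs_cdf_add_sub_cdf_neg_le [IsProbabilityMeasure μ]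
    (hc : Continuous (cdf μ)) (hsymm : ∀ t, cdf μ (-t) = 1 - cdf μ t) (b : ℝ) {u : ℝ}
    (hu : u ∈ Icc (0 : ℝ) 1) :
    μ {x | 1 - |cdf μ (x + b) - cdf μ (-x)| ≤ u} = ENNReal.ofReal u := by
  set f : ℝ → ℝ := fun x => cdf μ (x + b) - 1
  set G : ℝ → ℝ := fun x => f x + cdf μ x
  have hG_eq : ∀ x, cdf μ (x + b) - cdf μ (-x) = G x := fun x => by simp only [G, f, hsymm]; ring
  simp only [hG_eq]
  have hf_mono : Monotone f := fun x y hxy => by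
    simpa [f] using monotone_cdf μ (by linarith : x + b ≤ y + b)
  have hG_mono : Monotone G := hf_mono.add (monotone_cdf μ)
  have hG_cont : Continuous G := by fun_prop
  have hG_level : ∀ w, μ (G ⁻¹' {w}) = 0 := measure_setOf_add_cdf_eq hf_mono hc
  obtain ⟨hu0, hu1⟩ := hu
  rcases hu0.eq_or_lt with rfl | hu_pos
  · have hG_abs : ∀ x, |G x| ≤ 1 := fun x => abs_le.2
      ⟨by linarith [cdf_nonneg μ (x + b), cdf_nonneg μ x],
        by linarith [cdf_le_one μ (x + b), cdf_le_one μ x]⟩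
    refine ENNReal.ofReal_zero ▸ measure_mono_null (fun x (hx : 1 - |G x| ≤ 0) => ?_)
      (measure_union_null (hG_level 1) (hG_level (-1)))
    exact (abs_eq zero_le_one).1 (le_antisymm (hG_abs x) (by linarith))
  set c := 1 - u
  obtain ⟨q, hq⟩ : c ∈ range G := by
    refine mem_range_of_exists_le_of_exists_ge hG_cont ?_ ?_
    · exact ((tendsto_cdf_add_sub_one_add_cdf_atBot b).eventually_lt_const
        (by linarith : (-1 : ℝ) < c)).exists.imp fun _ => le_of_lt
    · exact ((tendsto_cdf_add_sub_one_add_cdf_atTop b).eventually_const_lt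
        (by linarith : c < 1)).exists.imp fun _ => le_of_lt
  set p := -q - b
  have hp : cdf μ p = 1 - cdf μ (q + b) := by rw [← hsymm, neg_add']
  have hGp : G p = -c := by
    simp only [G, f, p, sub_add_cancel, hp, hsymm, ← hq]
    ring
  have hset : {x | 1 - |G x| ≤ u} = {x | |G x| < c}ᶜ := by
    ext x
    simp only [mem_ofPred_eq, mem_compl_iff, not_lt, c]
    constructor <;> intro h <;> linarith
  have hae := hG_mono.setOf_abs_lt_ae_eq_Ioo hG_level hGp hq
  have hmass : cdf μ q - cdf μ p = c := by rw [hp, ← hq]; simp only [G, f]; ring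
  rw [hset, measure_congr hae.compl, prob_compl_eq_one_sub measurableSet_Ioo,
    measure_Ioo_of_continuous_cdf hc, hmass, ← ENNReal.ofReal_one,
    ← ENNReal.ofReal_sub _ (by linarith : 0 ≤ c)]
  simp only [c, sub_sub_cancel]

end ProbabilityTheory

theorem stmt_13 {Ω : Type*} [MeasurableSpace Ω] (P : Measure Ω) [IsProbabilityMeasure P]
    (T : Ω → ℝ) (hT : Measurable T)
    (F : ℝ → ℝ) (hF : F = fun t => ProbabilityTheory.cdf (P.map T) t)
    (hFcont : Continuous F) (hFsymm : ∀ t : ℝ, F (-t) = 1 - F t)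
    (b : ℝ) (u : ℝ) (hu : u ∈ Set.Icc (0 : ℝ) 1) :
    P {ω | 1 - |F (T ω + b) - F (-T ω)| ≤ u} = ENNReal.ofReal u := by
  subst hF
  have : IsProbabilityMeasure (P.map T) := Measure.isProbabilityMeasure_map hT.aemeasurable
  have hmeas : MeasurableSet {x | 1 - |cdf (P.map T) (x + b) - cdf (P.map T) (-x)| ≤ u} :=
    (isClosed_le (by fun_prop) continuous_const).measurableSet
  rw [← measure_one_sub_abs_cdf_add_sub_cdf_neg_le hFcont hFsymm b hu, Measure.map_apply hT hmeas]
  rfl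
end
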